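/- (Generalised Lovász Replication Lemma) If G' is an expansion of a perfect graph G, then G' is perfect. -/

import Mathlib

open SimpleGraph

variable {V A B W : Type*}

/-- A proper coloring of `G` with natural-number colors. -/
def IsProperColoring (G : SimpleGraph V) (f : V → ℕ) : Prop :=
  ∀ u v, G.Adj u v → f u ≠ f v

/-- The number of distinct colors used by `f` on all vertices. -/
def colorsUsed [Fintype V] (f : V → ℕ) : ℕ := (Finset.univ.image f).card

/-- `n` is the clique number of `G`. -/
def IsCliqueNum (G : SimpleGraph V) (n : ℕ) : Prop :=
  IsGreatest {k | ∃ s : Finset V, G.IsNClique k s} n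

/-- `n` is the chromatic number of `G`. -/
def IsChromNum [Fintype V] (G : SimpleGraph V) (n : ℕ) : Prop :=
  IsLeast {k | ∃ f : V → ℕ, IsProperColoring G f ∧ colorsUsed f = k} n

/-- A graph is nice if its chromatic number equals its clique number. -/
def Nice [Fintype V] (G : SimpleGraph V) : Prop :=
  ∀ n, IsCliqueNum G n → IsChromNum G n

/-- A graph is perfect if every induced subgraph is nice. -/
def IsPerfect [Fintype V] (G : SimpleGraph V) : Prop :=
  ∀ s : Finset V, Nice (G.induce (s : Set V))

/-- A stable (independent) set of vertices. -/
def IsStableSet (G : SimpleGraph V) (I : Set V) : Prop :=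
  ∀ x ∈ I, ∀ y ∈ I, ¬ G.Adj x y

/-- `n` is the independence number of `G`. -/
def IsIndepNum (G : SimpleGraph V) (n : ℕ) : Prop :=
  IsGreatest {k | ∃ I : Finset V, IsStableSet G (I : Set V) ∧ I.card = k} n

/-- A stable cover: a collection of stable sets covering all vertices. -/
def IsStableCover (G : SimpleGraph V) (C : Finset (Finset V)) : Prop :=
  (∀ I ∈ C, IsStableSet G (I : Set V)) ∧ ∀ v : V, ∃ I ∈ C, v ∈ I

/-- A clique cover: a collection of cliques covering all vertices. -/
def IsCliqueCover (G : SimpleGraph V) (C : Finset (Finset V)) : Prop :=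
  (∀ K ∈ C, G.IsClique (K : Set V)) ∧ ∀ v : V, ∃ K ∈ C, v ∈ K

/-- `G` and `G'` are isomorphic via the mutually inverse maps `f` and `g`. -/
def IsoUsing (G : SimpleGraph A) (G' : SimpleGraph B) (f : A → B) (g : B → A) : Prop :=
  Function.Surjective f ∧ Function.Surjective g ∧ (∀ x, g (f x) = x) ∧
  (∀ x y, G.Adj x y ↔ G'.Adj (f x) (f y)) ∧ (∀ x y, G'.Adj x y ↔ G.Adj (g x) (g y))

/-- The graph obtained from `G` by replicating the vertex `a`:
the new vertex `none` is adjacent to `a` and to all neighbours of `a`. -/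
def replicate (G : SimpleGraph V) (a : V) : SimpleGraph (Option V) :=
  SimpleGraph.fromRel (fun x y => match x, y with
    | some x, some y => G.Adj x y
    | some x, none => x = a ∨ G.Adj x a
    | none, _ => False)

/-- `G'` is an expansion of `G`, witnessed by the backward map `g`. -/
def IsExpansionOf (G : SimpleGraph A) (G' : SimpleGraph B) (g : B → A) : Prop :=
  Function.Surjective g ∧
  (∀ x y : B, x ≠ y → g x = g y → G'.Adj x y) ∧
  (∀ x y : B, g x ≠ g y → (G'.Adj x y ↔ G.Adj (g x) (g y)))

/-!
If `g` is injective, `G'` is an induced subgraph of `G`. Otherwise two vertices `x ≠ y` of `G'`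
with `g x = g y` are adjacent twins, and every induced subgraph of `G' - y` is again an expansion
of an induced subgraph of `G`; so, by induction on the number of vertices, it suffices to prove
Lovász's replication step: if `b` is an adjacent twin of `a` and `H - b` is perfect, then `H` is
`ω(H)`-colourable. If `ω(H - b) < ω(H)`, give `b` a new colour. Otherwise take an
`ω(H)`-colouring of `H - b` and let `T` be the colour class of `a` with `a` swapped for `b`.
`T` is stable, and a clique of `H - T` using all `ω(H)` colours would contain `a` and extend by
`b` to a clique larger than `ω(H)`; so `H - T` is `(ω(H) - 1)`-colourable and `T` takes the last
colour.
-/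

namespace SimpleGraph

variable {G : SimpleGraph V} {H : SimpleGraph W}

lemma Embedding.cliqueNum_le [Finite W] (e : G ↪g H) : G.cliqueNum ≤ H.cliqueNum := by
  obtain ⟨s, hs⟩ := G.exists_isNClique_cliqueNum
  have hclique : H.IsClique (s.map e.toEmbedding : Set W) := by
    rw [Finset.coe_map]
    rintro _ ⟨x, hx, rfl⟩ _ ⟨y, hy, rfl⟩ hne
    exact e.map_adj_iff.2 (hs.isClique hx hy (ne_of_apply_ne _ hne))
  calc G.cliqueNum = (s.map e.toEmbedding).card := by rw [Finset.card_map, hs.card_eq]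
    _ ≤ H.cliqueNum := hclique.card_le_cliqueNum

lemma colorable_cliqueNum_congr [Finite V] [Finite W] (e : G ≃g H) :
    G.Colorable G.cliqueNum ↔ H.Colorable H.cliqueNum :=
  ⟨fun h => ((colorable_congr e).1 h).mono e.toEmbedding.cliqueNum_le,
    fun h => ((colorable_congr e).2 h).mono e.symm.toEmbedding.cliqueNum_le⟩

lemma colorable_succ_of_isIndepSet {s : Set V} {k : ℕ} (hs : G.IsIndepSet s)
    (hc : (G.induce sᶜ).Colorable k) : G.Colorable (k + 1) := by
  classical
  obtain ⟨C⟩ := hc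
  have C' : G.Coloring (Option (Fin k)) :=
    Coloring.mk (fun v => if h : v ∈ s then none else some (C ⟨v, h⟩)) fun {u v} huv => by
      by_cases hu : u ∈ s <;> by_cases hv : v ∈ s <;> simp only [hu, hv, dite_true, dite_false]
      · exact (hs hu hv huv.ne huv).elim
      · simp
      · simp
      · exact (Option.some_injective _).ne (C.valid huv)
  simpa using C'.colorable

section Twins

variable {a b : V} {α : Type*}

/-- The colour class of `a` in `G - b`, with `a` swapped for `b`. -/
def twinClass (c : (G.induce {b}ᶜ).Coloring α) (a : ({b}ᶜ : Set V)) : Set V :=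
  {v | v ≠ a ∧ ∀ h : v ≠ b, c ⟨v, h⟩ = c a}

lemma mem_twinClass_self (c : (G.induce {b}ᶜ).Coloring α) (a : ({b}ᶜ : Set V)) :
    b ∈ twinClass c a :=
  ⟨fun h => a.2 h.symm, fun h => (h rfl).elim⟩

lemma isIndepSet_twinClass (htwin : ∀ v, v ≠ a → v ≠ b → G.Adj v b → G.Adj v a)
    (c : (G.induce {b}ᶜ).Coloring α) (ha : a ≠ b) : G.IsIndepSet (twinClass c ⟨a, ha⟩) := by
  have hnotb : ∀ v ∈ twinClass c ⟨a, ha⟩, ∀ h : v ≠ b, ¬G.Adj v b := fun v hv h hvb =>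
    c.valid (show (G.induce {b}ᶜ).Adj ⟨v, h⟩ ⟨a, ha⟩ from htwin v hv.1 h hvb) (hv.2 h)
  intro u hu v hv huv hadj
  by_cases hub : u = b
  · subst hub
    exact hnotb v hv (Ne.symm huv) hadj.symm
  by_cases hvb : v = b
  · subst hvb
    exact hnotb u hu hub hadj
  exact c.valid (show (G.induce {b}ᶜ).Adj ⟨u, hub⟩ ⟨v, hvb⟩ from hadj)
    ((hu.2 hub).trans (hv.2 hvb).symm)

lemma cliqueNum_induce_compl_twinClass_lt [Finite V] [Fintype α] (hab : G.Adj a b)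
    (htwin : ∀ v, v ≠ a → v ≠ b → G.Adj v a → G.Adj v b)
    (c : (G.induce {b}ᶜ).Coloring α) (hα : G.cliqueNum ≤ Fintype.card α) :
    (G.induce (twinClass c ⟨a, hab.ne⟩)ᶜ).cliqueNum < Fintype.card α := by
  classical
  set T := twinClass c ⟨a, hab.ne⟩
  by_contra! hge
  obtain ⟨t, ht⟩ := (G.induce Tᶜ).exists_isNClique_cliqueNum
  have hsub : Tᶜ ≤ {b}ᶜ :=
    Set.compl_subset_compl.2 (Set.singleton_subset_iff.2 (mem_twinClass_self c _))
  let cT : (G.induce Tᶜ).Coloring α := c.comp (G.induceHomOfLE hsub).toHom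
  obtain ⟨x, hxt, hx⟩ := cT.surjOn_of_card_le_isClique ht.isClique
    (by simpa [ht.card_eq] using hge) (Set.mem_univ (c ⟨a, hab.ne⟩))
  have hxa : (x : V) = a := by
    by_contra hxa
    exact x.2 ⟨hxa, fun _ => hx⟩
  set t' := t.map (Function.Embedding.subtype _)
  have ht' : G.IsNClique (G.induce Tᶜ).cliqueNum t' := (isNClique_induce_iff _ _ _).1 ht
  have hat' : a ∈ t' := Finset.mem_map.2 ⟨x, hxt, hxa⟩
  have hbt' : ∀ y ∈ t', G.Adj b y := by
    intro y hy
    obtain ⟨y', -, rfl⟩ := Finset.mem_map.1 hy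
    have hyb : (y' : V) ≠ b := fun h => y'.2 (h ▸ mem_twinClass_self c _)
    by_cases hya : (y' : V) = a
    · simpa [hya] using hab.symm
    · exact (htwin _ hya hyb (ht'.isClique hy hat' hya)).symm
  have hcard := (ht'.insert hbt').isClique.card_le_cliqueNum
  rw [(ht'.insert hbt').card_eq] at hcard
  omega

theorem colorable_cliqueNum_of_twins [Finite V] (hab : G.Adj a b)
    (htwin : ∀ v, v ≠ a → v ≠ b → (G.Adj v a ↔ G.Adj v b))
    (hperf : ∀ s : Set V, b ∉ s → (G.induce s).Colorable (G.induce s).cliqueNum) :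
    G.Colorable G.cliqueNum := by
  obtain hlt | heq := (G.cliqueNum_induce_le {b}ᶜ).lt_or_eq
  · exact (colorable_succ_of_isIndepSet (Set.pairwise_singleton b _)
      (hperf _ (by simp))).mono hlt
  obtain ⟨c⟩ : (G.induce {b}ᶜ).Colorable G.cliqueNum := heq ▸ hperf {b}ᶜ (by simp)
  have hlt := cliqueNum_induce_compl_twinClass_lt hab (fun v hva hvb => (htwin v hva hvb).1) c
    (by simp)
  rw [Fintype.card_fin] at hlt
  refine (colorable_succ_of_isIndepSet ?_ (hperf _ ?_)).mono hlt
  · exact isIndepSet_twinClass (fun v hva hvb => (htwin v hva hvb).2) c hab.ne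
  · simpa using mem_twinClass_self c _

end Twins

end SimpleGraph

section ChromaticAndCliqueNumbers

variable {G : SimpleGraph V}

lemma isCliqueNum_cliqueNum [Finite V] (G : SimpleGraph V) : IsCliqueNum G G.cliqueNum :=
  ⟨G.exists_isNClique_cliqueNum, fun _ ⟨_, hs⟩ => hs.card_eq ▸ hs.isClique.card_le_cliqueNum⟩

lemma isCliqueNum_iff [Finite V] {n : ℕ} : IsCliqueNum G n ↔ n = G.cliqueNum :=
  ⟨fun h => h.unique (isCliqueNum_cliqueNum G), fun h => h ▸ isCliqueNum_cliqueNum G⟩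

lemma IsProperColoring.colorable [Fintype V] {f : V → ℕ} (hf : IsProperColoring G f) :
    G.Colorable (colorsUsed f) := by
  have C : G.Coloring (Finset.univ.image f) :=
    Coloring.mk (fun v => ⟨f v, Finset.mem_image_of_mem f (Finset.mem_univ v)⟩)
      fun huv heq => hf _ _ huv (congrArg Subtype.val heq)
  simpa [colorsUsed] using C.colorable

lemma SimpleGraph.Colorable.exists_isProperColoring [Fintype V] {n : ℕ} (h : G.Colorable n) :
    ∃ f, IsProperColoring G f ∧ colorsUsed f ≤ n := by
  obtain ⟨C, hC⟩ := (colorable_iff_exists_bdd_nat_coloring n).1 h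
  refine ⟨C, fun _ _ huv => C.valid huv, ?_⟩
  calc colorsUsed C ≤ (Finset.range n).card :=
        Finset.card_le_card fun _ hk => by
          obtain ⟨v, -, rfl⟩ := Finset.mem_image.1 hk
          exact Finset.mem_range.2 (hC v)
    _ = n := Finset.card_range n

lemma cliqueNum_le_colorsUsed [Fintype V] {f : V → ℕ} (hf : IsProperColoring G f) :
    G.cliqueNum ≤ colorsUsed f := by
  obtain ⟨s, hs⟩ := G.exists_isNClique_cliqueNum
  exact hs.card_eq ▸ hs.isClique.card_le_of_colorable hf.colorable

lemma nice_iff_colorable_cliqueNum [Fintype V] : Nice G ↔ G.Colorable G.cliqueNum := by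
  simp only [Nice, isCliqueNum_iff, forall_eq]
  constructor
  · rintro ⟨⟨f, hf, hcard⟩, -⟩
    exact hcard ▸ hf.colorable
  · intro h
    obtain ⟨f, hf, hle⟩ := h.exists_isProperColoring
    exact ⟨⟨f, hf, le_antisymm hle (cliqueNum_le_colorsUsed hf)⟩,
      fun _ ⟨f', hf', hk⟩ => hk ▸ cliqueNum_le_colorsUsed hf'⟩

lemma IsPerfect.colorable_induce [Fintype V] (hG : IsPerfect G) (s : Set V) :
    (G.induce s).Colorable (G.induce s).cliqueNum := by
  obtain ⟨t, rfl⟩ := s.toFinite.exists_finset_coe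
  exact nice_iff_colorable_cliqueNum.1 (hG t)

end ChromaticAndCliqueNumbers

/-- `G'` is an expansion of the subgraph of `G` induced on the range of `g`. -/
def IsWeakExpansionOf (G : SimpleGraph A) (G' : SimpleGraph B) (g : B → A) : Prop :=
  (∀ x y : B, x ≠ y → g x = g y → G'.Adj x y) ∧
  (∀ x y : B, g x ≠ g y → (G'.Adj x y ↔ G.Adj (g x) (g y)))

namespace IsWeakExpansionOf

variable {G : SimpleGraph A} {G' : SimpleGraph B} {g : B → A}

lemma induce (h : IsWeakExpansionOf G G' g) (s : Set B) :
    IsWeakExpansionOf G (G'.induce s) (g ∘ Subtype.val) :=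
  ⟨fun x y hxy => h.1 x y (Subtype.val_injective.ne hxy), fun x y => h.2 x y⟩

lemma adj_iff_of_apply_eq (h : IsWeakExpansionOf G G' g) {x y v : B} (hxy : g x = g y)
    (hvx : v ≠ x) (hvy : v ≠ y) : G'.Adj v x ↔ G'.Adj v y := by
  by_cases hv : g v = g x
  · exact iff_of_true (h.1 _ _ hvx hv) (h.1 _ _ hvy (hv.trans hxy))
  · rw [h.2 _ _ hv, h.2 _ _ (hxy ▸ hv), hxy]

noncomputable def isoInduceRange (h : IsWeakExpansionOf G G' g) (hg : g.Injective) :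
    G' ≃g G.induce (Set.range g) where
  toEquiv := Equiv.ofInjective g hg
  map_rel_iff' {x y} := by
    by_cases hxy : x = y
    · subst hxy
      simp
    · exact (h.2 x y (hg.ne hxy)).symm

theorem colorable_cliqueNum [Fintype A] [Finite B] (hG : IsPerfect G)
    (h : IsWeakExpansionOf G G' g) : G'.Colorable G'.cliqueNum := by
  induction hn : Nat.card B using Nat.strong_induction_on generalizing B with
  | _ n ih =>
    by_cases hg : g.Injective
    · exact (colorable_cliqueNum_congr (h.isoInduceRange hg)).2 (hG.colorable_induce _)
    obtain ⟨x, y, hxy, hne⟩ := Function.not_injective_iff.1 hg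
    refine colorable_cliqueNum_of_twins (h.1 x y hne hxy)
      (fun v hvx hvy => h.adj_iff_of_apply_eq hxy hvx hvy) fun s hs => ?_
    exact ih _ (hn ▸ Finite.card_subtype_lt hs) (h.induce s) rfl

end IsWeakExpansionOf

theorem stmt17 [Fintype A] [Fintype B] (G : SimpleGraph A) (G' : SimpleGraph B)
    (g : B → A) (h : IsExpansionOf G G' g) (hG : IsPerfect G) :
    IsPerfect G' := fun s =>
  nice_iff_colorable_cliqueNum.2 ((IsWeakExpansionOf.induce h.2 s).colorable_cliqueNum hG)
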